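/- arXiv:math/9806140 — 2 statements merged into one kernel-verified Lean document; each statement's English description precedes it below -/
import Mathlib

section
/- Assume 2h is not a nonpositive integer. If n, m ∈ ℤ satisfy n, m ≥ −1 or n, m ≤ 1, then [L_n, L_m] = (n−m)·L_{n+m}. -/
open Polynomial

noncomputable section

/-- Multiplication by `X` (the operator `l₋₁`). -/
def mulX : Module.End ℂ (Polynomial ℂ) := LinearMap.mulLeft ℂ (X : Polynomial ℂ)

/-- The differentiation operator `d/dz` (the operator `D`). -/
def der : Module.End ℂ (Polynomial ℂ) := Polynomial.derivative

/-- The generators `l₋₁, l₀, l₁` of `sl(2,ℂ)` acting on the Verma module `V_h ≅ ℂ[z]`. -/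
def lgen (h : ℝ) (i : ℤ) : Module.End ℂ (Polynomial ℂ) :=
  if i = -1 then mulX
  else if i = 0 then mulX * der + (h : ℂ) • 1
  else if i = 1 then mulX * der * der + ((2 * h : ℝ) : ℂ) • der
  else 0

/-- The operator `F`, `F zⁿ = zⁿ⁺¹/(n+2h)`. -/
def Fop (h : ℝ) : Module.End ℂ (Polynomial ℂ) :=
  (Polynomial.basisMonomials ℂ).constr ℂ fun n =>
    (((n : ℂ) + 2 * (h : ℂ))⁻¹) • (X : Polynomial ℂ) ^ (n + 1)

/-- The `q_R`-conformal symmetries `L_k` (`k ∈ ℤ`) acting on `ℂ[z]`. -/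
def Lop (h : ℝ) (k : ℤ) : Module.End ℂ (Polynomial ℂ) :=
  (Polynomial.basisMonomials ℂ).constr ℂ fun n =>
    if 0 ≤ k then
      ((((n : ℂ) - (k : ℂ)) + ((k : ℂ) + 1) * (h : ℂ)) * (n.descFactorial k.toNat : ℂ)) •
        (X : Polynomial ℂ) ^ (n - k.toNat)
    else
      (((n : ℂ) + (((-k).toNat : ℂ) + 1) * (h : ℂ)) /
          ∏ j ∈ Finset.range (-k).toNat, ((n : ℂ) + 2 * (h : ℂ) + (j : ℂ))) •
        (X : Polynomial ℂ) ^ (n + (-k).toNat)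

/-- The deviations `A_{n,m} = [L_n, L_m] − (n−m)·L_{n+m}`. -/
def dev (h : ℝ) (n m : ℤ) : Module.End ℂ (Polynomial ℂ) :=
  Lop h n * Lop h m - Lop h m * Lop h n - ((n - m : ℤ) : ℂ) • Lop h (n + m)

/-- The diagonal eigenvalue `a_k(j)` of the deviation `A_{k,−k}` on the monomial `z^j`. -/
def adiag (h : ℝ) (k : ℤ) (j : ℕ) : ℂ := ((dev h k (-k)) ((X : Polynomial ℂ) ^ j)).coeff j

/-- The weight `⟨zⁿ, zⁿ⟩ = n!·(2h)(2h+1)⋯(2h+n−1)`. -/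
def wgt (h : ℝ) (n : ℕ) : ℝ := (n.factorial : ℝ) * ∏ j ∈ Finset.range n, (2 * h + (j : ℝ))

/-- The inner product of the unitarizable Verma module (`h > 0`), conjugate-linear in
the first argument. -/
def ip (h : ℝ) (p q : Polynomial ℂ) : ℂ :=
  ∑ n ∈ p.support, (starRingEnd ℂ) (p.coeff n) * q.coeff n * ((wgt h n : ℝ) : ℂ)

/-- The associated norm. -/
def nrm (h : ℝ) (p : Polynomial ℂ) : ℝ := Real.sqrt (ip h p p).re

/-- The fundamental form `α_{i,j} = ((6h²−6h+1)/6)·(j³−j)·δ_{i+j,0}`. -/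
def alphaF (h : ℝ) (i j : ℤ) : ℝ :=
  if i + j = 0 then ((6 * h ^ 2 - 6 * h + 1) / 6) * ((j : ℝ) ^ 3 - (j : ℝ)) else 0

/-- The inverse fundamental form `α^{k,−k} = −1/α_{k,−k}` (for `|k| ≥ 2`). -/
def alphaInv (h : ℝ) (k : ℤ) : ℝ := -1 / alphaF h k (-k)


def Pp (h : ℝ) (n K : ℕ) : ℂ := ∏ i ∈ Finset.range K, ((n : ℂ) + 2 * (h : ℂ) + (i : ℂ))
lemma basis_eq (j : ℕ) : (X : Polynomial ℂ)^j = (Polynomial.basisMonomials ℂ) j := by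
  rw [Polynomial.coe_basisMonomials]; simp [X_pow_eq_monomial]
lemma Lop_nn (h : ℝ) (a j : ℕ) :
    Lop h (a:ℤ) ((X:Polynomial ℂ)^j)
      = (((j:ℂ) - (a:ℂ) + ((a:ℂ)+1)*(h:ℂ)) * (j.descFactorial a : ℂ)) • (X:Polynomial ℂ)^(j - a) := by
  rw [Lop, basis_eq, Module.Basis.constr_basis, if_pos (Int.ofNat_nonneg a)]
  norm_num
lemma Lop_neg (h : ℝ) (K j : ℕ) :
    Lop h (-(K:ℤ)) ((X:Polynomial ℂ)^j)
      = (((j:ℂ) + ((K:ℂ)+1)*(h:ℂ)) / Pp h j K) • (X:Polynomial ℂ)^(j + K) := by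
  cases K with
  | zero => rw [show (-(0:ℕ) : ℤ) = ((0:ℕ):ℤ) by simp, Lop_nn]; simp [Pp]
  | succ K =>
      rw [Lop, basis_eq, Module.Basis.constr_basis, if_neg (by omega)]
      have h1 : ((-(-((K+1:ℕ):ℤ))).toNat) = K + 1 := by omega
      rw [h1]; push_cast; rfl
lemma hc_of (h : ℝ) (hnd : ∀ n : ℕ, 2 * h ≠ -(n : ℝ)) (x : ℕ) : (x:ℂ) + 2*(h:ℂ) ≠ 0 := by
  intro hx
  apply hnd x
  have : ((x + 2*h : ℝ) : ℂ) = 0 := by push_cast; linear_combination hx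
  have := Complex.ofReal_eq_zero.mp this
  linarith
lemma Pp_ne (h : ℝ) (hnd : ∀ n : ℕ, 2 * h ≠ -(n : ℝ)) (j K : ℕ) : Pp h j K ≠ 0 := by
  rw [Pp]
  apply Finset.prod_ne_zero_iff.mpr
  intro i _
  have := hc_of h hnd (j + i)
  push_cast at this
  intro hx; apply this; linear_combination hx
lemma Pp_mul (h : ℝ) (j K L : ℕ) : Pp h j K * Pp h (j+K) L = Pp h j (K+L) := by
  rw [Pp, Pp, Pp, Finset.prod_range_add]
  congr 1
  apply Finset.prod_congr rfl
  intro i _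
  push_cast
  ring
lemma Pp_mul' (h : ℝ) (j K L : ℕ) : Pp h j L * Pp h (j+L) K = Pp h j (K+L) := by
  rw [Pp_mul, Nat.add_comm]

lemma negNeg (h : ℝ) (hnd : ∀ n : ℕ, 2 * h ≠ -(n : ℝ)) (K L : ℕ) :
    Lop h (-(K:ℤ)) * Lop h (-(L:ℤ)) - Lop h (-(L:ℤ)) * Lop h (-(K:ℤ))
      = (((-(K:ℤ)) - -(L:ℤ) : ℤ) : ℂ) • Lop h (-(K:ℤ) + -(L:ℤ)) := by
  refine Module.Basis.ext (Polynomial.basisMonomials ℂ) fun j => ?_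
  rw [← basis_eq]
  have hKL : (-(K:ℤ) + -(L:ℤ)) = -((K+L:ℕ):ℤ) := by push_cast; ring
  rw [LinearMap.sub_apply, LinearMap.smul_apply, Module.End.mul_apply, Module.End.mul_apply,
    hKL, Lop_neg, Lop_neg, map_smul, map_smul, Lop_neg, Lop_neg, Lop_neg,
    smul_smul, smul_smul, smul_smul,
    show j + L + K = j + (K + L) by omega, show j + K + L = j + (K + L) by omega,
    ← sub_smul]
  congr 1
  rw [div_mul_div_comm, div_mul_div_comm, Pp_mul', Pp_mul]
  have hP := Pp_ne h hnd j (K+L)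
  field_simp
  push_cast
  ring

lemma dF_mul (j b a : ℕ) : j.descFactorial b * (j - b).descFactorial a = j.descFactorial (b + a) := by
  induction a with
  | zero => simp
  | succ a ih =>
      rw [Nat.descFactorial_succ, ← Nat.add_assoc, Nat.descFactorial_succ, ← ih, Nat.sub_sub]
      ring

lemma posP (h : ℝ) (a b : ℕ) :
    Lop h (a:ℤ) * Lop h (b:ℤ) - Lop h (b:ℤ) * Lop h (a:ℤ)
      = (((a:ℤ) - (b:ℤ) : ℤ) : ℂ) • Lop h ((a:ℤ) + (b:ℤ)) := by
  refine Module.Basis.ext (Polynomial.basisMonomials ℂ) fun j => ?_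
  rw [← basis_eq]
  have hab : ((a:ℤ) + (b:ℤ)) = ((a+b:ℕ):ℤ) := by push_cast; ring
  rw [LinearMap.sub_apply, LinearMap.smul_apply, Module.End.mul_apply, Module.End.mul_apply,
    hab, Lop_nn, Lop_nn, map_smul, map_smul, Lop_nn, Lop_nn, Lop_nn,
    smul_smul, smul_smul, smul_smul,
    show j - b - a = j - (a + b) by omega, show j - a - b = j - (a + b) by omega,
    ← sub_smul]
  congr 1
  have e1 : ((j.descFactorial b : ℂ)) * ((j-b).descFactorial a : ℂ) = (j.descFactorial (a+b) : ℂ) := by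
    rw [← Nat.cast_mul, dF_mul, Nat.add_comm b a]
  have e2 : ((j.descFactorial a : ℂ)) * ((j-a).descFactorial b : ℂ) = (j.descFactorial (a+b) : ℂ) := by
    rw [← Nat.cast_mul, dF_mul]
  push_cast
  rcases le_or_gt (a + b) j with hj | hj
  · rw [Nat.cast_sub (by omega : b ≤ j), Nat.cast_sub (by omega : a ≤ j)]
    linear_combination (((j:ℂ) - b + ((b:ℂ)+1)*h) * (((j:ℂ) - (b:ℂ)) - a + ((a:ℂ)+1)*h)) * e1
      - (((j:ℂ) - a + ((a:ℂ)+1)*h) * (((j:ℂ) - (a:ℂ)) - b + ((b:ℂ)+1)*h)) * e2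
  · have e3 : ((j.descFactorial (a+b) : ℕ) : ℂ) = 0 := by
      rw [Nat.descFactorial_eq_zero_iff_lt.mpr hj]; simp
    push_cast at e3
    set x : ℂ := ((j - b : ℕ) : ℂ)
    set y : ℂ := ((j - a : ℕ) : ℂ)
    linear_combination (((j:ℂ) - b + ((b:ℂ)+1)*h) * (x - a + ((a:ℂ)+1)*h)) * e1
      - (((j:ℂ) - a + ((a:ℂ)+1)*h) * (y - b + ((b:ℂ)+1)*h)) * e2
      + ((((j:ℂ) - b + ((b:ℂ)+1)*h) * (x - a + ((a:ℂ)+1)*h))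
         - (((j:ℂ) - a + ((a:ℂ)+1)*h) * (y - b + ((b:ℂ)+1)*h))
         - (((a:ℂ)) - b) * ((j:ℂ) - ((a:ℂ)+(b:ℂ)) + ((a:ℂ)+(b:ℂ)+1)*h)) * e3

lemma Lop_neg_one (h : ℝ) (hnd : ∀ n : ℕ, 2 * h ≠ -(n : ℝ)) (j : ℕ) :
    Lop h (-1:ℤ) ((X:Polynomial ℂ)^j) = (X:Polynomial ℂ)^(j+1) := by
  rw [show (-1:ℤ) = -((1:ℕ):ℤ) by norm_num, Lop_neg]
  have h1 : Pp h j 1 = (j:ℂ) + 2*(h:ℂ) := by simp [Pp, Finset.prod_range_one]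
  rw [h1]
  have h2 : ((j:ℂ) + (((1:ℕ):ℂ)+1)*h) / ((j:ℂ) + 2*(h:ℂ)) = 1 := by
    rw [div_eq_one_iff_eq (hc_of h hnd j)]; push_cast; ring
  rw [h2, one_smul]

lemma posNeg1 (h : ℝ) (hnd : ∀ n : ℕ, 2 * h ≠ -(n : ℝ)) (A : ℕ) :
    Lop h ((A:ℤ)+1) * Lop h (-1:ℤ) - Lop h (-1:ℤ) * Lop h ((A:ℤ)+1)
      = ((((A:ℤ)+1) - (-1) : ℤ) : ℂ) • Lop h ((A:ℤ)+1 + -1) := by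
  have hA1 : ((A:ℤ)+1) = ((A+1:ℕ):ℤ) := by push_cast; ring
  have hA0 : ((A:ℤ)+1 + -1) = ((A:ℕ):ℤ) := by push_cast; ring
  refine Module.Basis.ext (Polynomial.basisMonomials ℂ) fun j => ?_
  rw [← basis_eq, LinearMap.sub_apply, LinearMap.smul_apply, Module.End.mul_apply,
    Module.End.mul_apply, hA0, hA1, Lop_neg_one h hnd, Lop_nn, Lop_nn, map_smul,
    Lop_neg_one h hnd, Lop_nn, smul_smul]
  rcases lt_trichotomy j A with hj | hj | hj
  · have z1 : ((j+1).descFactorial (A+1)) = 0 := Nat.descFactorial_eq_zero_iff_lt.mpr (by omega)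
    have z2 : (j.descFactorial (A+1)) = 0 := Nat.descFactorial_eq_zero_iff_lt.mpr (by omega)
    have z3 : (j.descFactorial A) = 0 := Nat.descFactorial_eq_zero_iff_lt.mpr (by omega)
    rw [z1, z2, z3]
    simp
  · subst hj
    have z2 : (j.descFactorial (j+1)) = 0 := Nat.descFactorial_eq_zero_iff_lt.mpr (by omega)
    rw [z2]
    simp only [Nat.cast_zero, mul_zero, zero_mul, zero_smul, sub_zero,
      Nat.add_sub_cancel, Nat.sub_self, Nat.descFactorial_self, smul_smul]
    congr 1
    rw [Nat.factorial_succ]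
    push_cast
    ring
  · rw [show (j+1) - (A+1) = j - A by omega, show (j - (A+1)) + 1 = j - A by omega,
      ← sub_smul]
    congr 1
    have ea : (((j+1).descFactorial (A+1) : ℕ) : ℂ) = ((j:ℂ)+1) * (j.descFactorial A : ℂ) := by
      rw [Nat.succ_descFactorial_succ]; push_cast; ring
    have eb : ((j.descFactorial (A+1) : ℕ) : ℂ) = ((j:ℂ) - A) * (j.descFactorial A : ℂ) := by
      rw [Nat.descFactorial_succ, Nat.cast_mul, Nat.cast_sub (by omega : A ≤ j)]
    push_cast
    linear_combination ((j:ℂ)+1 - ((A:ℂ)+1) + ((A:ℂ)+2)*h) * ea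
      - ((j:ℂ) - ((A:ℂ)+1) + ((A:ℂ)+2)*h) * eb

lemma oneNeg (h : ℝ) (hnd : ∀ n : ℕ, 2 * h ≠ -(n : ℝ)) (M : ℕ) :
    Lop h (1:ℤ) * Lop h (-((M+1:ℕ):ℤ)) - Lop h (-((M+1:ℕ):ℤ)) * Lop h (1:ℤ)
      = (((1:ℤ) - (-((M+1:ℕ):ℤ)) : ℤ) : ℂ) • Lop h ((1:ℤ) + -((M+1:ℕ):ℤ)) := by
  have hM : ((1:ℤ) + -((M+1:ℕ):ℤ)) = -((M:ℕ):ℤ) := by push_cast; ring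
  have h1 : (1:ℤ) = ((1:ℕ):ℤ) := by norm_num
  refine Module.Basis.ext (Polynomial.basisMonomials ℂ) fun j => ?_
  rw [← basis_eq, LinearMap.sub_apply, LinearMap.smul_apply, Module.End.mul_apply,
    Module.End.mul_apply, hM, h1, Lop_neg, Lop_nn, map_smul, map_smul, Lop_nn, Lop_neg,
    Lop_neg, Nat.descFactorial_one, Nat.descFactorial_one, smul_smul, smul_smul, smul_smul]
  have hPjM := Pp_ne h hnd j M
  have hjM : ((j:ℂ) + (M:ℂ) + 2*(h:ℂ)) ≠ 0 := by
    have := hc_of h hnd (j+M); push_cast at this; intro hx; exact this (by linear_combination hx)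
  have r2 : ∀ x : ℕ, Pp h x (M+1) = Pp h x M * ((x:ℂ) + (M:ℂ) + 2*(h:ℂ)) := by
    intro x
    rw [← Pp_mul h x M 1]
    congr 1
    rw [Pp, Finset.prod_range_one]
    push_cast
    ring
  rcases Nat.eq_zero_or_pos j with hj | hj
  · subst hj
    simp only [Nat.cast_zero, zero_mul, mul_zero, zero_smul, sub_zero, smul_smul]
    rw [show (0+(M+1)) - 1 = 0 + M by omega]
    congr 1
    rw [r2]
    have hP0M := Pp_ne h hnd 0 M
    have h0M : ((0:ℕ):ℂ) + (M:ℂ) + 2*(h:ℂ) ≠ 0 := by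
      have := hc_of h hnd M; push_cast at this ⊢; intro hx; exact this (by linear_combination hx)
    push_cast at h0M ⊢
    rw [div_mul_eq_mul_div, mul_div_assoc', div_eq_div_iff (mul_ne_zero hP0M h0M) hP0M]
    ring
  · have hj1 : ((j - 1 : ℕ) : ℂ) = (j:ℂ) - 1 := by rw [Nat.cast_sub (by omega)]; norm_num
    have hj1ne : ((j:ℂ) - 1 + 2*(h:ℂ)) ≠ 0 := by
      have := hc_of h hnd (j-1); rw [hj1] at this; intro hx; exact this (by linear_combination hx)
    have r1 : Pp h (j-1) (M+1) = ((j:ℂ) - 1 + 2*(h:ℂ)) * Pp h j M := by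
      rw [show M + 1 = 1 + M by omega, ← Pp_mul h (j-1) 1 M, show j - 1 + 1 = j by omega]
      congr 1
      simp [Pp, Finset.prod_range_one, hj1]
    rw [show (j+(M+1)) - 1 = j + M by omega, show (j-1)+(M+1) = j + M by omega, ← sub_smul]
    congr 1
    rw [r1, r2, hj1]
    push_cast
    simp only [div_mul_eq_mul_div, mul_div_assoc']
    rw [div_sub_div _ _ (mul_ne_zero hPjM hjM) (mul_ne_zero hj1ne hPjM),
      div_eq_div_iff (mul_ne_zero (mul_ne_zero hPjM hjM) (mul_ne_zero hj1ne hPjM)) hPjM]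
    ring

lemma mainLe (h : ℝ) (hnd : ∀ n : ℕ, 2 * h ≠ -(n : ℝ)) (n m : ℤ)
    (hnm : (-1 ≤ n ∧ -1 ≤ m) ∨ (n ≤ 1 ∧ m ≤ 1)) (hle : m ≤ n) :
    Lop h n * Lop h m - Lop h m * Lop h n = ((n - m : ℤ) : ℂ) • Lop h (n + m) := by
  rcases le_or_gt 0 m with hm | hm
  · have hn : 0 ≤ n := le_trans hm hle
    have := posP h n.toNat m.toNat
    rwa [Int.toNat_of_nonneg hn, Int.toNat_of_nonneg hm] at this
  · rcases le_or_gt 0 n with hn | hn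
    · rcases hnm with ⟨_, hm1⟩ | ⟨hn1, _⟩
      · have hm' : m = -1 := by omega
        subst hm'
        rcases eq_or_lt_of_le hn with hn0 | hn0
        · have := negNeg h hnd 0 1
          norm_num at this
          rw [← hn0]
          convert this using 2
          norm_num
        · have hA : n = ((n.toNat - 1 : ℕ) : ℤ) + 1 := by omega
          rw [hA]
          exact posNeg1 h hnd (n.toNat - 1)
      · have hmK : m = -(((-m).toNat : ℕ) : ℤ) := by omega
        have hn01 : n = 0 ∨ n = 1 := by omega
        rcases hn01 with hn0 | hn0
        · subst hn0
          rw [hmK]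
          have := negNeg h hnd 0 ((-m).toNat)
          norm_num at this ⊢
          convert this using 2
        · subst hn0
          have hmM : m = -((((-m).toNat - 1 : ℕ) + 1 : ℕ) : ℤ) := by omega
          rw [hmM]
          exact oneNeg h hnd ((-m).toNat - 1)
    · have hnK : n = -(((-n).toNat : ℕ) : ℤ) := by omega
      have hmL : m = -(((-m).toNat : ℕ) : ℤ) := by omega
      rw [hnK, hmL]
      exact negNeg h hnd ((-n).toNat) ((-m).toNat)

lemma stmt10' (h : ℝ) (hnd : ∀ n : ℕ, 2 * h ≠ -(n : ℝ)) (n m : ℤ)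
    (hnm : (-1 ≤ n ∧ -1 ≤ m) ∨ (n ≤ 1 ∧ m ≤ 1)) :
    Lop h n * Lop h m - Lop h m * Lop h n = ((n - m : ℤ) : ℂ) • Lop h (n + m) := by
  rcases le_total m n with hle | hle
  · exact mainLe h hnd n m hnm hle
  · have H := mainLe h hnd m n (by tauto) hle
    rw [show n + m = m + n from add_comm n m,
      show Lop h n * Lop h m - Lop h m * Lop h n
          = -(Lop h m * Lop h n - Lop h n * Lop h m) from (neg_sub _ _).symm,
      H, show ((n - m : ℤ) : ℂ) = -((m - n : ℤ) : ℂ) by push_cast; ring]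
    exact (neg_smul (((m - n : ℤ)) : ℂ) (Lop h (m + n))).symm


/-- `[L_n, L_m] = (n−m)·L_{n+m}` whenever `n, m ≥ −1` or `n, m ≤ 1`. -/
theorem stmt10 (h : ℝ) (hnd : ∀ n : ℕ, 2 * h ≠ -(n : ℝ)) (n m : ℤ)
    (hnm : (-1 ≤ n ∧ -1 ≤ m) ∨ (n ≤ 1 ∧ m ≤ 1)) :
    Lop h n * Lop h m - Lop h m * Lop h n = ((n - m : ℤ) : ℂ) • Lop h (n + m) := by
  exact stmt10' h hnd n m hnm
end
end

section
/- Let h > 0. The sesquilinear form on ℂ[z] determined by ⟨z^n, z^m⟩ = 0 for n ≠ m and ⟨z^n, z^n⟩ = n!·(2h)(2h+1)⋯(2h+n−1) is a positive definite inner product and is contravariant: ⟨l_i p, q⟩ = ⟨p, l_{−i} q⟩ for all i ∈ {−1, 0, 1} and all p, q ∈ ℂ[z] (the Verma module V_h over sl(2,ℂ) is unitarizable for h > 0). -/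
open Polynomial

noncomputable section

/-! The monomials are orthogonal, and the norms `wgt h n` are exactly the ones for which
`l₋₁` and `l₁` are adjoint: `l₁ zⁿ⁺¹ = (n+1)(n+2h) zⁿ` and `wgt h (n+1) = (n+1)(n+2h) wgt h n`.
`l₀` is diagonal with real eigenvalues `n + h`, and the case of `l₁` is the conjugate of
that of `l₋₁`. -/

lemma wgt_pos {h : ℝ} (hh : 0 < h) (n : ℕ) : 0 < wgt h n :=
  mul_pos (by positivity) (Finset.prod_pos fun _ _ => by positivity)

lemma wgt_succ (h : ℝ) (n : ℕ) :
    wgt h (n + 1) = ((n : ℝ) + 1) * (2 * h + n) * wgt h n := by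
  unfold wgt
  rw [Nat.factorial_succ, Finset.prod_range_succ]
  push_cast
  ring

lemma ip_eq_sum_of_support_subset (h : ℝ) {p : ℂ[X]} (q : ℂ[X]) {s : Finset ℕ}
    (hs : p.support ⊆ s) :
    ip h p q = ∑ n ∈ s, (starRingEnd ℂ) (p.coeff n) * q.coeff n * (wgt h n : ℂ) :=
  Finset.sum_subset hs fun n _ hn => by simp [notMem_support_iff.mp hn]

lemma ip_add_left (h : ℝ) (p p' q : ℂ[X]) : ip h (p + p') q = ip h p q + ip h p' q := by
  classical
  let s := p.support ∪ p'.support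
  rw [ip_eq_sum_of_support_subset h q (support_add : (p + p').support ⊆ s),
    ip_eq_sum_of_support_subset h q (Finset.subset_union_left : p.support ⊆ s),
    ip_eq_sum_of_support_subset h q (Finset.subset_union_right : p'.support ⊆ s),
    ← Finset.sum_add_distrib]
  refine Finset.sum_congr rfl fun n _ => ?_
  rw [coeff_add, map_add]
  ring

lemma ip_add_right (h : ℝ) (p q q' : ℂ[X]) : ip h p (q + q') = ip h p q + ip h p q' := by
  unfold ip
  rw [← Finset.sum_add_distrib]
  refine Finset.sum_congr rfl fun n _ => ?_
  rw [coeff_add]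
  ring

lemma ip_smul_left (h : ℝ) (c : ℂ) (p q : ℂ[X]) :
    ip h (c • p) q = (starRingEnd ℂ) c * ip h p q := by
  rw [ip_eq_sum_of_support_subset h q (support_smul c p), ip, Finset.mul_sum]
  refine Finset.sum_congr rfl fun n _ => ?_
  rw [coeff_smul, smul_eq_mul, map_mul]
  ring

lemma ip_smul_right (h : ℝ) (c : ℂ) (p q : ℂ[X]) : ip h p (c • q) = c * ip h p q := by
  unfold ip
  rw [Finset.mul_sum]
  refine Finset.sum_congr rfl fun n _ => ?_
  rw [coeff_smul, smul_eq_mul]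
  ring

lemma ip_conj_symm (h : ℝ) (p q : ℂ[X]) : ip h p q = (starRingEnd ℂ) (ip h q p) := by
  classical
  let s := p.support ∪ q.support
  rw [ip_eq_sum_of_support_subset h q (Finset.subset_union_left : p.support ⊆ s),
    ip_eq_sum_of_support_subset h p (Finset.subset_union_right : q.support ⊆ s), map_sum]
  refine Finset.sum_congr rfl fun n _ => ?_
  simp only [map_mul, Complex.conj_conj, Complex.conj_ofReal]
  ring

lemma ip_self (h : ℝ) (p : ℂ[X]) :
    ip h p p = ((∑ n ∈ p.support, Complex.normSq (p.coeff n) * wgt h n : ℝ) : ℂ) := by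
  rw [ip, Complex.ofReal_sum]
  refine Finset.sum_congr rfl fun n _ => ?_
  rw [Complex.ofReal_mul, mul_comm ((starRingEnd ℂ) (p.coeff n)), Complex.mul_conj]

lemma ip_self_re_pos {h : ℝ} (hh : 0 < h) {p : ℂ[X]} (hp : p ≠ 0) : 0 < (ip h p p).re := by
  rw [ip_self, Complex.ofReal_re]
  exact Finset.sum_pos (fun n hn => mul_pos (Complex.normSq_pos.mpr (mem_support_iff.mp hn))
    (wgt_pos hh n)) (support_nonempty.mpr hp)

lemma ip_self_im (h : ℝ) (p : ℂ[X]) : (ip h p p).im = 0 := by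
  rw [ip_self, Complex.ofReal_im]

lemma lgen_neg_one_apply (h : ℝ) (p : ℂ[X]) : lgen h (-1) p = X * p := by
  simp [lgen, mulX]

lemma coeff_lgen_zero (h : ℝ) (q : ℂ[X]) (n : ℕ) :
    (lgen h 0 q).coeff n = ((n : ℂ) + h) * q.coeff n := by
  simp only [lgen, if_neg (by decide : (0 : ℤ) ≠ -1), if_true, LinearMap.add_apply,
    LinearMap.smul_apply, Module.End.mul_apply, Module.End.one_apply, mulX, der,
    LinearMap.mulLeft_apply, coeff_add, coeff_smul, smul_eq_mul]
  cases n with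
  | zero => simp
  | succ m =>
    rw [coeff_X_mul, coeff_derivative]
    push_cast
    ring

lemma coeff_lgen_one (h : ℝ) (q : ℂ[X]) (n : ℕ) :
    (lgen h 1 q).coeff n = ((n : ℂ) + 1) * ((n : ℂ) + 2 * h) * q.coeff (n + 1) := by
  simp only [lgen, if_neg (by decide : (1 : ℤ) ≠ -1), if_neg one_ne_zero, if_true,
    LinearMap.add_apply, LinearMap.smul_apply, Module.End.mul_apply, mulX, der,
    LinearMap.mulLeft_apply, coeff_add, coeff_smul, smul_eq_mul]
  cases n with
  | zero => simp [coeff_derivative]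
  | succ m =>
    rw [coeff_X_mul, coeff_derivative, coeff_derivative]
    push_cast
    ring

lemma ip_lgen_neg_one (h : ℝ) (p q : ℂ[X]) :
    ip h (lgen h (-1) p) q = ip h p (lgen h 1 q) := by
  have hXp : (X * p).support ⊆ Finset.range (p.natDegree + 2) :=
    supp_subset_range (natDegree_mul_le.trans_lt (by rw [natDegree_X]; omega))
  rw [lgen_neg_one_apply, ip_eq_sum_of_support_subset h q hXp,
    ip_eq_sum_of_support_subset h _ (supp_subset_range (Nat.lt_succ_self _)),
    Finset.sum_range_succ', coeff_X_mul_zero, map_zero, zero_mul, zero_mul, add_zero]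
  refine Finset.sum_congr rfl fun n _ => ?_
  rw [coeff_X_mul, coeff_lgen_one, wgt_succ]
  push_cast
  ring

lemma ip_lgen_zero (h : ℝ) (p q : ℂ[X]) : ip h (lgen h 0 p) q = ip h p (lgen h 0 q) := by
  have hsupp : (lgen h 0 p).support ⊆ p.support := fun n hn => by
    rw [mem_support_iff, coeff_lgen_zero] at hn
    exact mem_support_iff.mpr (right_ne_zero_of_mul hn)
  rw [ip_eq_sum_of_support_subset h q hsupp, ip]
  refine Finset.sum_congr rfl fun n _ => ?_
  simp only [coeff_lgen_zero, map_mul, map_add, map_natCast, Complex.conj_ofReal]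
  ring

lemma ip_lgen_one (h : ℝ) (p q : ℂ[X]) : ip h (lgen h 1 p) q = ip h p (lgen h (-1) q) := by
  rw [ip_conj_symm h, ← ip_lgen_neg_one, ← ip_conj_symm]

/-- For `h > 0` the form `⟨·,·⟩` with `⟨zⁿ, zᵐ⟩ = δ_{nm}·n!·(2h)⋯(2h+n−1)`
is a positive definite inner product (sesquilinear, conjugate-symmetric, positive definite)
and is contravariant: `⟨l_i p, q⟩ = ⟨p, l_{−i} q⟩` for `i ∈ {−1,0,1}`. -/
theorem stmt16 (h : ℝ) (hh : 0 < h) :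
    (∀ p p' q : Polynomial ℂ, ip h (p + p') q = ip h p q + ip h p' q) ∧
    (∀ p q q' : Polynomial ℂ, ip h p (q + q') = ip h p q + ip h p q') ∧
    (∀ (c : ℂ) (p q : Polynomial ℂ), ip h (c • p) q = (starRingEnd ℂ) c * ip h p q) ∧
    (∀ (c : ℂ) (p q : Polynomial ℂ), ip h p (c • q) = c * ip h p q) ∧
    (∀ p q : Polynomial ℂ, ip h p q = (starRingEnd ℂ) (ip h q p)) ∧
    (∀ p : Polynomial ℂ, p ≠ 0 → 0 < (ip h p p).re ∧ (ip h p p).im = 0) ∧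
    (∀ i ∈ ({-1, 0, 1} : Set ℤ), ∀ p q : Polynomial ℂ,
      ip h ((lgen h i) p) q = ip h p ((lgen h (-i)) q)) := by
  refine ⟨ip_add_left h, ip_add_right h, ip_smul_left h, ip_smul_right h, ip_conj_symm h,
    fun p hp => ⟨ip_self_re_pos hh hp, ip_self_im h p⟩, ?_⟩
  rintro i (rfl | rfl | rfl) p q
  · exact ip_lgen_neg_one h p q
  · exact ip_lgen_zero h p q
  · exact ip_lgen_one h p q
end
end
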